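/- In the braid group B₃ = ⟨a, b ∣ aba = bab⟩, the center of B₃ equals the cyclic subgroup generated by the element (aba)². -/

import Mathlib

/-!
Write `Δ = aba`. Conjugation by `Δ` swaps `a` and `b`, so `Δ²` is central. Conversely,
`a ↦ y⁻¹x, b ↦ x⁻¹y²` is a surjection of `B₃` onto the free product `C₂ ∗ C₃ = ⟨x⟩ ∗ ⟨y⟩`
sending `Δ ↦ x` and `ab ↦ y`; since `Δ² = (ab)³`, the assignment `x ↦ Δ, y ↦ ab` gives a
homomorphism `C₂ ∗ C₃ → B₃ ⧸ ⟨Δ²⟩` whose composite with it is the quotient map. A central element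
of `B₃` maps into the center of `C₂ ∗ C₃`, which is trivial by the normal form theorem for free
products, so it lies in `⟨Δ²⟩`.
-/

/-- The braid relation `aba = bab` (as the relator `aba(bab)⁻¹`) on two generators. -/
def braidRels : Set (FreeGroup (Fin 2)) :=
  {FreeGroup.of 0 * FreeGroup.of 1 * FreeGroup.of 0 *
    (FreeGroup.of 1 * FreeGroup.of 0 * FreeGroup.of 1)⁻¹}

/-- The braid group `B₃ = ⟨a, b ∣ aba = bab⟩`. -/
abbrev B₃ : Type := PresentedGroup braidRels

/-- The generator `a` of `B₃`. -/
def a : B₃ := PresentedGroup.of 0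

/-- The generator `b` of `B₃`. -/
def b : B₃ := PresentedGroup.of 1

open Monoid

theorem Subgroup.map_mem_center_of_surjective {G H : Type*} [Group G] [Group H] {f : G →* H}
    (hf : Function.Surjective f) {z : G} (hz : z ∈ center G) : f z ∈ center H := by
  rw [mem_center_iff] at hz ⊢
  intro h
  obtain ⟨g, rfl⟩ := hf h
  rw [← map_mul, ← map_mul, hz g]

def zmodPowersHom {G : Type*} [Group G] (n : ℕ) (g : G) (hg : g ^ n = 1) :
    Multiplicative (ZMod n) →* G :=
  AddMonoidHom.toMultiplicativeLeft
    (ZMod.lift n ⟨zmultiplesHom (Additive G) (Additive.ofMul g), by simp [← ofMul_pow, hg]⟩)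

theorem zmodPowersHom_ofAdd_one {G : Type*} [Group G] (n : ℕ) (g : G) (hg : g ^ n = 1) :
    zmodPowersHom n g hg (Multiplicative.ofAdd 1) = g := by
  rw [zmodPowersHom, AddMonoidHom.toMultiplicativeLeft_apply_apply, toAdd_ofAdd, ← Int.cast_one,
    ZMod.lift_coe]
  simp

theorem mem_zpowers_ofAdd_one {n : ℕ} (m : Multiplicative (ZMod n)) :
    m ∈ Subgroup.zpowers (Multiplicative.ofAdd 1) := by
  obtain ⟨k, hk⟩ := ZMod.intCast_surjective m.toAdd
  exact ⟨k, by simp [← ofAdd_zsmul, hk]⟩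

namespace Monoid.CoprodI

variable {ι : Type*} {M : ι → Type*} [∀ i, Monoid (M i)]

theorem Word.prod_injective : Function.Injective (Word.prod : Word M → CoprodI M) := by
  classical
  exact Word.equiv.symm.injective

theorem exists_neWord_prod_eq {z : CoprodI M} (hz : z ≠ 1) :
    ∃ (i j : ι) (w : NeWord M i j), w.prod = z := by
  classical
  have hprod : (Word.equiv z).prod = z := Word.equiv.symm_apply_apply z
  have hne : Word.equiv z ≠ Word.empty := by
    intro h
    rw [h, Word.prod_empty] at hprod
    exact hz hprod.symm
  obtain ⟨i, j, w, hw⟩ := NeWord.of_word _ hne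
  exact ⟨i, j, w, by rw [NeWord.prod, hw, hprod]⟩

namespace NeWord

theorem toList_eq_of_prod_eq {i j k l : ι} {w₁ : NeWord M i j} {w₂ : NeWord M k l}
    (h : w₁.prod = w₂.prod) : w₁.toList = w₂.toList :=
  congrArg Word.toList (Word.prod_injective h)

theorem of_mul_prod_ne_prod_mul_of {i j k : ι} (w : NeWord M i j) {c : M k} (hc : c ≠ 1)
    (hki : k ≠ i) (hjk : j ≠ k) : of c * w.prod ≠ w.prod * of c := by
  intro h
  have hlist := toList_eq_of_prod_eq (w₁ := append (singleton c hc) hki w)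
    (w₂ := append w hjk (singleton c hc)) (by simpa only [append_prod, prod_singleton] using h)
  have hhead := congrArg List.head? hlist
  rw [toList_head?, toList_head?, Option.some_inj, Sigma.mk.injEq] at hhead
  exact hki hhead.1

theorem of_mul_prod_ne_prod_mul_of_head {i j : ι} (w : NeWord M i j) (hij : i ≠ j) {c : M i}
    (hc : c ≠ 1) (hcw : c * w.head ≠ 1) : of c * w.prod ≠ w.prod * of c := by
  intro h
  have hlist := toList_eq_of_prod_eq (w₁ := mulHead w c hcw)
    (w₂ := append w hij.symm (singleton c hc))
    (by simpa only [append_prod, prod_singleton, mulHead_prod] using h)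
  have hlast := congrArg List.getLast? hlist
  rw [toList_getLast?, toList_getLast?, Option.some_inj, Sigma.mk.injEq] at hlast
  exact hij hlast.1.symm

end NeWord

/-- `h₀` says that `G i₀` has at least three elements. Then for every nontrivial reduced word `w`
some letter `c` makes the reduced forms of `c * w` and `w * c` start or end in different factors. -/
theorem center_eq_bot {G : ι → Type*} [∀ i, Group (G i)] {i₀ i₁ : ι}
    (h₀ : ∀ g : G i₀, ∃ c ≠ 1, c * g ≠ 1) (h₁ : i₁ ≠ i₀) [Nontrivial (G i₁)] :
    Subgroup.center (CoprodI G) = ⊥ := by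
  refine (Subgroup.eq_bot_iff_forall _).2 fun z hz => ?_
  by_contra hz1
  obtain ⟨i, j, w, rfl⟩ := exists_neWord_prod_eq hz1
  have hcomm := Subgroup.mem_center_iff.mp hz
  by_cases hi : i = i₀ <;> by_cases hj : j = i₀
  · subst hi hj
    obtain ⟨c, hc⟩ := exists_ne (1 : G i₁)
    exact w.of_mul_prod_ne_prod_mul_of hc h₁ h₁.symm (hcomm _)
  · subst hi
    obtain ⟨c, hc, hcw⟩ := h₀ w.head
    exact w.of_mul_prod_ne_prod_mul_of_head (Ne.symm hj) hc hcw (hcomm _)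
  · subst hj
    have hcomm' := Subgroup.mem_center_iff.mp (inv_mem hz)
    rw [← NeWord.inv_prod] at hcomm'
    obtain ⟨c, hc, hcw⟩ := h₀ w.inv.head
    exact w.inv.of_mul_prod_ne_prod_mul_of_head (Ne.symm hi) hc hcw (hcomm' _)
  · obtain ⟨c, hc, -⟩ := h₀ 1
    exact w.of_mul_prod_ne_prod_mul_of hc (Ne.symm hi) hj (hcomm _)

end Monoid.CoprodI

abbrev CyclicFactor (i : Fin 2) : Type := Multiplicative (ZMod (i.val + 2))

instance (i : Fin 2) : Fact (1 < i.val + 2) := ⟨by omega⟩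

abbrev C₂C₃ : Type := CoprodI CyclicFactor

namespace C₂C₃

def gen (i : Fin 2) : C₂C₃ := CoprodI.of (i := i) (Multiplicative.ofAdd 1)

theorem gen_pow_eq_one (i : Fin 2) : gen i ^ (i.val + 2) = 1 := by
  rw [gen, ← map_pow, ← ofAdd_nsmul, nsmul_one, ZMod.natCast_self, ofAdd_zero, map_one]

theorem center_eq_bot : Subgroup.center C₂C₃ = ⊥ :=
  CoprodI.center_eq_bot (i₀ := 1) (i₁ := 0) (by decide) (by decide)

theorem eq_top_of_gen_mem {H : Subgroup C₂C₃} (h : ∀ i, gen i ∈ H) : H = ⊤ := by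
  refine (Subgroup.eq_top_iff' H).2 fun g => ?_
  induction g using CoprodI.induction_on with
  | one => exact one_mem H
  | of i m =>
    obtain ⟨k, rfl⟩ := mem_zpowers_ofAdd_one m
    rw [map_zpow]
    exact zpow_mem (h i) k
  | mul x y hx hy => exact mul_mem hx hy

def lift {H : Type*} [Group H] (h : Fin 2 → H) (hh : ∀ i, h i ^ (i.val + 2) = 1) : C₂C₃ →* H :=
  CoprodI.lift fun i => zmodPowersHom _ (h i) (hh i)

theorem lift_gen {H : Type*} [Group H] (h : Fin 2 → H) (hh : ∀ i, h i ^ (i.val + 2) = 1)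
    (i : Fin 2) : lift h hh (gen i) = h i := by
  rw [lift, gen, CoprodI.lift_of, zmodPowersHom_ofAdd_one]

end C₂C₃

theorem braid_rel : a * b * a = b * a * b :=
  mul_inv_eq_one.mp (PresentedGroup.one_of_mem (Set.mem_singleton _))

namespace B₃

def lift {G : Type*} [Group G] (s t : G) (h : s * t * s = t * s * t) : B₃ →* G :=
  PresentedGroup.toGroup (f := ![s, t]) <| by
    rintro r rfl
    simp only [map_mul, map_inv, FreeGroup.lift_apply_of, Matrix.cons_val_zero,
      Matrix.cons_val_one]
    exact mul_inv_eq_one.2 h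

theorem lift_a {G : Type*} [Group G] (s t : G) (h : s * t * s = t * s * t) : lift s t h a = s :=
  PresentedGroup.toGroup.of _

theorem lift_b {G : Type*} [Group G] (s t : G) (h : s * t * s = t * s * t) : lift s t h b = t :=
  PresentedGroup.toGroup.of _

theorem hom_ext {G : Type*} [Group G] {f g : B₃ →* G} (ha : f a = g a) (hb : f b = g b) :
    f = g :=
  PresentedGroup.ext (Fin.forall_fin_two.2 ⟨ha, hb⟩)

end B₃

local notation "Δ" => a * b * a

theorem delta_mul_a : Δ * a = b * Δ :=
  calc Δ * a = b * a * b * a := by rw [braid_rel]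
    _ = b * Δ := by simp only [mul_assoc]

theorem delta_mul_b : Δ * b = a * Δ :=
  calc Δ * b = a * (b * a * b) := by simp only [mul_assoc]
    _ = a * Δ := by rw [braid_rel]

theorem delta_sq_eq_pow_three : Δ ^ 2 = (a * b) ^ 3 := by
  rw [sq]
  nth_rewrite 2 [braid_rel]
  simp only [pow_succ, pow_zero, one_mul, mul_assoc]

theorem delta_sq_mul_a : Δ ^ 2 * a = a * Δ ^ 2 := by
  rw [sq, mul_assoc, delta_mul_a, ← mul_assoc, delta_mul_b, mul_assoc]

theorem delta_sq_mul_b : Δ ^ 2 * b = b * Δ ^ 2 := by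
  rw [sq, mul_assoc, delta_mul_b, ← mul_assoc, delta_mul_a, mul_assoc]

theorem delta_sq_mem_center : Δ ^ 2 ∈ Subgroup.center B₃ := by
  refine Subgroup.mem_center_iff.2 fun g => Subgroup.mem_centralizer_singleton_iff.1 ?_
  refine PresentedGroup.generated_by _ _ (Fin.forall_fin_two.2 ⟨?_, ?_⟩) g
  · exact Subgroup.mem_centralizer_singleton_iff.2 delta_sq_mul_a.symm
  · exact Subgroup.mem_centralizer_singleton_iff.2 delta_sq_mul_b.symm

abbrev deltaSqPowers : Subgroup B₃ := Subgroup.zpowers (Δ ^ 2)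

instance : deltaSqPowers.Normal where
  conj_mem n hn g := by
    rwa [Subgroup.mem_center_iff.1 (Subgroup.zpowers_le.2 delta_sq_mem_center hn) g,
      mul_inv_cancel_right]

open C₂C₃ in
def toC₂C₃ : B₃ →* C₂C₃ :=
  B₃.lift ((gen 1)⁻¹ * gen 0) ((gen 0)⁻¹ * gen 1 ^ 2) <| by
    have hx : gen 0 ^ 2 = 1 := gen_pow_eq_one 0
    have hy : gen 1 ^ 3 = 1 := gen_pow_eq_one 1
    calc (gen 1)⁻¹ * gen 0 * ((gen 0)⁻¹ * gen 1 ^ 2) * ((gen 1)⁻¹ * gen 0) = gen 0 := by group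
      _ = (gen 0)⁻¹ * gen 1 ^ 3 := by rw [hy, mul_one, eq_inv_iff_mul_eq_one, ← sq, hx]
      _ = (gen 0)⁻¹ * gen 1 ^ 2 * ((gen 1)⁻¹ * gen 0) * ((gen 0)⁻¹ * gen 1 ^ 2) := by group

theorem toC₂C₃_delta : toC₂C₃ Δ = C₂C₃.gen 0 := by
  simp only [map_mul, toC₂C₃, B₃.lift_a, B₃.lift_b]
  group

theorem toC₂C₃_a_mul_b : toC₂C₃ (a * b) = C₂C₃.gen 1 := by
  simp only [map_mul, toC₂C₃, B₃.lift_a, B₃.lift_b]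
  group

theorem toC₂C₃_surjective : Function.Surjective toC₂C₃ :=
  MonoidHom.range_eq_top.1 <| C₂C₃.eq_top_of_gen_mem <|
    Fin.forall_fin_two.2 ⟨⟨_, toC₂C₃_delta⟩, ⟨_, toC₂C₃_a_mul_b⟩⟩

def ofC₂C₃ : C₂C₃ →* (B₃ ⧸ deltaSqPowers) :=
  C₂C₃.lift ![QuotientGroup.mk' deltaSqPowers Δ, QuotientGroup.mk' deltaSqPowers (a * b)] <| by
    refine Fin.forall_fin_two.2 ⟨?_, ?_⟩
    · show QuotientGroup.mk' deltaSqPowers Δ ^ 2 = 1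
      rw [← map_pow, QuotientGroup.mk'_apply, QuotientGroup.eq_one_iff]
      exact Subgroup.mem_zpowers _
    · show QuotientGroup.mk' deltaSqPowers (a * b) ^ 3 = 1
      rw [← map_pow, QuotientGroup.mk'_apply, QuotientGroup.eq_one_iff, ← delta_sq_eq_pow_three]
      exact Subgroup.mem_zpowers _

theorem ofC₂C₃_comp_toC₂C₃ : ofC₂C₃.comp toC₂C₃ = QuotientGroup.mk' deltaSqPowers := by
  refine B₃.hom_ext ?_ ?_ <;>
  · simp only [MonoidHom.comp_apply, toC₂C₃, B₃.lift_a, B₃.lift_b, map_mul, map_inv,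
      sq, ofC₂C₃, C₂C₃.lift_gen, Matrix.cons_val_zero, Matrix.cons_val_one]
    group

/-- The center of `B₃ = ⟨a, b ∣ aba = bab⟩` is the cyclic subgroup generated by `(aba)²`. -/
theorem stmt_10 : Subgroup.center B₃ = Subgroup.zpowers ((a * b * a) ^ 2) := by
  refine le_antisymm (fun z hz => ?_) (Subgroup.zpowers_le.2 delta_sq_mem_center)
  have hz' : toC₂C₃ z = 1 := by
    simpa only [C₂C₃.center_eq_bot, Subgroup.mem_bot] using Subgroup.map_mem_center_of_surjective toC₂C₃_surjective hz
  rw [← QuotientGroup.eq_one_iff, ← QuotientGroup.mk'_apply, ← ofC₂C₃_comp_toC₂C₃,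
    MonoidHom.comp_apply, hz', map_one]
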